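/- arXiv:1502.04588 — 5 statements merged into one kernel-verified Lean document; each statement's English description precedes it below -/
import Mathlib

section
/- Fix a scale r > 0 and a shortest path cover SPC(r). If u, v ∈ V are vertices with dist(u, SPC(r)) > cr/4 and dist(v, SPC(r)) > cr/4, then either dist(u,v) ≤ r or dist(u,v) > cr/2. -/
open SimpleGraph

universe u

variable {V : Type u}

/-- The length of a walk in a graph `G` with edge lengths `len`. -/
noncomputable def wlen {G : SimpleGraph V} (len : V → V → ℝ) {u v : V} (w : G.Walk u v) : ℝ :=
  (w.darts.map (fun e => len e.toProd.1 e.toProd.2)).sum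

/-- A walk is a *shortest path* (w.r.t. the shortest-path metric `d`) if it is a
path whose total length equals the distance between its endpoints. -/
def IsShortestPath {G : SimpleGraph V} (len d : V → V → ℝ) {u v : V}
    (w : G.Walk u v) : Prop :=
  w.IsPath ∧ wlen len w = d u v

/-- `d` is the shortest-path metric of the graph `G` with edge lengths `len`:
it is a lower bound on the length of every walk, and for every pair of vertices it
is attained by some path (a shortest path). -/
def IsShortestPathMetric (G : SimpleGraph V) (len d : V → V → ℝ) : Prop :=
  (∀ (u v : V) (w : G.Walk u v), d u v ≤ wlen len w) ∧
  (∀ u v : V, ∃ w : G.Walk u v, IsShortestPath len d w)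

/-- The closed ball `B_r(v)` of radius `r` around `v` (w.r.t. `d`). -/
def cball (d : V → V → ℝ) (v : V) (r : ℝ) : Set V := {u | d u v ≤ r}

/-- A *shortest path cover* for scale `r` (with parameter `c`): a set of hubs
hitting every shortest path of length in `(r, c*r/2]`. -/
def IsSPC (G : SimpleGraph V) (len d : V → V → ℝ) (c r : ℝ) (H : Set V) : Prop :=
  ∀ (u v : V) (w : G.Walk u v), IsShortestPath len d w →
    r < wlen len w → wlen len w ≤ c * r / 2 → ∃ h ∈ H, h ∈ w.support

/-- A minimal shortest path cover: no proper subset is a shortest path cover. -/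
def IsMinimalSPC (G : SimpleGraph V) (len d : V → V → ℝ) (c r : ℝ) (H : Set V) : Prop :=
  IsSPC G len d c r H ∧ ∀ H' : Set V, H' ⊂ H → ¬ IsSPC G len d c r H'

/-- `H` is locally `s`-sparse for scale `r`: every ball of radius `c*r/2` contains
at most `s` vertices of `H`. -/
def LocallySparse (d : V → V → ℝ) (c r : ℝ) (s : ℕ) (H : Set V) : Prop :=
  ∀ v : V, (H ∩ cball d v (c * r / 2)).ncard ≤ s

/-- Definition 1: the highway dimension of `G` is at most `k` if for every scale
`r > 0` and every ball of radius `c*r`, there are at most `k` vertices in the ball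
hitting all shortest paths of length more than `r` that lie inside the ball. -/
def HighwayDimLE (G : SimpleGraph V) (len d : V → V → ℝ) (c : ℝ) (k : ℕ) : Prop :=
  ∀ r : ℝ, 0 < r → ∀ v : V, ∃ H : Set V, H ⊆ cball d v (c * r) ∧ H.ncard ≤ k ∧
    ∀ (a b : V) (w : G.Walk a b), IsShortestPath len d w →
      (∀ x ∈ w.support, x ∈ cball d v (c * r)) → r < wlen len w →
      ∃ h ∈ H, h ∈ w.support

lemma wlen_append {G : SimpleGraph V} (len : V → V → ℝ) {a b c : V}
    (p : G.Walk a b) (q : G.Walk b c) :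
    wlen len (p.append q) = wlen len p + wlen len q := by
  simp [wlen, SimpleGraph.Walk.darts_append]

lemma wlen_reverse {G : SimpleGraph V} (len : V → V → ℝ)
    (hsymm : ∀ u v : V, len u v = len v u) {a b : V} (p : G.Walk a b) :
    wlen len p.reverse = wlen len p := by
  simp only [wlen, SimpleGraph.Walk.darts_reverse, List.map_reverse, List.sum_reverse,
    List.map_map]
  refine congrArg List.sum (List.map_congr_left fun e _ => ?_)
  simp [SimpleGraph.Dart.symm, hsymm e.toProd.1 e.toProd.2]

/-- Lemma 5 of the paper: if both `u` and `v` are at distance more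
than `c*r/4` from all hubs of a shortest path cover `SPC(r)`, then either
`dist(u,v) ≤ r` or `dist(u,v) > c*r/2`. -/
theorem statement0 {V : Type} [Fintype V] (G : SimpleGraph V) (len d : V → V → ℝ)
    (hlen_symm : ∀ u v : V, len u v = len v u)
    (hlen_pos : ∀ u v : V, G.Adj u v → 0 < len u v)
    (hmetric : IsShortestPathMetric G len d)
    (c : ℝ) (hc : 4 ≤ c) (r : ℝ) (hr : 0 < r)
    (H : Set V) (hH : IsSPC G len d c r H)
    (u v : V)
    (hu : ∀ h ∈ H, c * r / 4 < d u h)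
    (hv : ∀ h ∈ H, c * r / 4 < d v h) :
    d u v ≤ r ∨ c * r / 2 < d u v := by
  classical
  by_contra hcon
  push_neg at hcon
  obtain ⟨h1, h2⟩ := hcon
  obtain ⟨w, hw⟩ := hmetric.2 u v
  have hwl : wlen len w = d u v := hw.2
  obtain ⟨h, hhH, hhs⟩ := hH u v w hw (by rw [hwl]; exact h1) (by rw [hwl]; exact h2)
  have hsplit := w.take_spec hhs
  have hadd : wlen len (w.takeUntil h hhs) + wlen len (w.dropUntil h hhs) = d u v := by
    have h5 := wlen_append len (w.takeUntil h hhs) (w.dropUntil h hhs)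
    rw [hsplit] at h5
    rw [← hwl, ← h5]
  have huh : d u h ≤ wlen len (w.takeUntil h hhs) := hmetric.1 u h _
  have hvh : d v h ≤ wlen len (w.dropUntil h hhs) := by
    have := hmetric.1 v h (w.dropUntil h hhs).reverse
    rwa [wlen_reverse len hlen_symm] at this
  have h3 := hu h hhH
  have h4 := hv h hhH
  linarith
end

section
/- Let T ∈ 𝒯 be a town of level j with approximate core hubs X_T = ⋃_{i=1}^{j−1} X_T^i. Let B ⊆ V be a set of diameter at most ε r_l for some level l, and let i be the lowest level for which X_T^i ∩ B ≠ ∅. Then for every level q with max{i,l} ≤ q ≤ j−1, every approximate core hub of level q in B belongs to a level at most max{l,i}; that is, B ∩ X_T^q ⊆ ⋃_{p=1}^{max{l,i}} X_T^p. -/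
open SimpleGraph

universe u

variable {V : Type u}

/-- The scale `r_i = (c/4)^i` of level `i`. -/
noncomputable def rlev (c : ℝ) (i : ℕ) : ℝ := (c / 4) ^ i

/-- A *town* at level `i`, w.r.t. the fixed shortest path covers `SPC`. -/
def IsTownAt (d : V → V → ℝ) (SPC : ℕ → Set V) (c : ℝ) (i : ℕ) (T : Set V) : Prop :=
  ∃ v : V, (∀ h ∈ SPC i, 2 * rlev c i < d v h) ∧ T = {u | d u v ≤ rlev c i}

/-- The *sprawl* at level `i`: all vertices lying in no town of level `i`. -/
def sprawl (d : V → V → ℝ) (SPC : ℕ → Set V) (c : ℝ) (i : ℕ) : Set V :=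
  {u | ∀ T : Set V, IsTownAt d SPC c i T → u ∉ T}

/-- A member of the towns decomposition `𝒯`: a town at some level. -/
def IsTown (d : V → V → ℝ) (SPC : ℕ → Set V) (c : ℝ) (T : Set V) : Prop :=
  ∃ i : ℕ, IsTownAt d SPC c i T

/-- `T'` is a *child town* of `T` in the laminar family of towns:
a maximal town strictly contained in `T`. -/
def IsChildTown (d : V → V → ℝ) (SPC : ℕ → Set V) (c : ℝ) (T' T : Set V) : Prop :=
  IsTown d SPC c T' ∧ IsTown d SPC c T ∧ T' ⊂ T ∧
    ∀ T'' : Set V, IsTown d SPC c T'' → T' ⊂ T'' → ¬ T'' ⊂ T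

/-- The *core* `C_i` of a town `T` of level `j` on level `i ≤ j`:
`C j = T` and `C i = sprawl i ∩ C (i+1)` for `i < j`. -/
def townCore (d : V → V → ℝ) (SPC : ℕ → Set V) (c : ℝ) (T : Set V) (j i : ℕ) : Set V :=
  T ∩ {u | ∀ q : ℕ, i ≤ q → q < j → u ∈ sprawl d SPC c q}

/-- One shifting step of Algorithm 2: `h'` is a valid approximate version of the
core hub `h` on level `i`: either `h'` is a previously constructed approximate core
hub (of some level `l < i`) at distance at most `ε * rlev c i` from `h`, or no such
hub exists and `h' = h`. -/
def ApproxShift (d : V → V → ℝ) (c ε : ℝ) (X : ℕ → Set V) (i : ℕ) (h h' : V) : Prop :=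
  ((∃ l : ℕ, l < i ∧ h' ∈ X l) ∧ d h h' ≤ ε * rlev c i) ∨
  ((¬ ∃ l : ℕ, l < i ∧ ∃ h'' ∈ X l, d h h'' ≤ ε * rlev c i) ∧ h' = h)

/-- `X` is a family of levelwise approximate core hubs `X i = X_T^i` of the town `T`
of level `j`, as produced by Algorithm 2; the set of approximate core hubs of `T` is
`X_T = ⋃ i, X i`. -/
def IsApproxCoreHubFamily (d : V → V → ℝ) (SPC : ℕ → Set V) (c ε : ℝ)
    (T : Set V) (j : ℕ) (X : ℕ → Set V) : Prop :=
  X 0 = ∅ ∧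
  (∀ i : ℕ, j ≤ i → X i = ∅) ∧
  (1 < j → X 1 = townCore d SPC c T j 1 ∩ SPC 1) ∧
  ∀ i : ℕ, 2 ≤ i → i < j →
    (∀ h ∈ townCore d SPC c T j i ∩ SPC i, ∃ h' ∈ X i, ApproxShift d c ε X i h h') ∧
    (∀ h' ∈ X i, ∃ h ∈ townCore d SPC c T j i ∩ SPC i, ApproxShift d c ε X i h h')

/-- Lemma 24 of the paper, "locally nested": let `T` be a town of
level `j` with approximate core hubs `X_T = ⋃ i ∈ [1, j-1], X_T^i`, let `B` have
diameter at most `ε * r_l`, and let `i` be the lowest level with `X_T^i ∩ B ≠ ∅`.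
Then for every level `q` with `max i l ≤ q ≤ j - 1`,
`B ∩ X_T^q ⊆ ⋃_{p=1}^{max l i} X_T^p`. -/
theorem statement6 {V : Type} [Fintype V] (G : SimpleGraph V) (len d : V → V → ℝ)
    (hlen_symm : ∀ u v : V, len u v = len v u)
    (hlen_pos : ∀ u v : V, G.Adj u v → 0 < len u v)
    (hmetric : IsShortestPathMetric G len d)
    (c : ℝ) (hc : 4 < c)
    (SPC : ℕ → Set V)
    (hSPC : ∀ i : ℕ, IsMinimalSPC G len d c (rlev c i) (SPC i))
    (hscale : ∀ u v : V, u ≠ v → c / 2 < d u v)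
    (ε : ℝ) (hε : 0 < ε)
    (T : Set V) (j : ℕ) (hT : IsTownAt d SPC c j T)
    (X : ℕ → Set V) (hX : IsApproxCoreHubFamily d SPC c ε T j X)
    (B : Set V) (l : ℕ) (hBdiam : ∀ x ∈ B, ∀ y ∈ B, d x y ≤ ε * rlev c l)
    (i : ℕ) (hi : (X i ∩ B).Nonempty) (hilow : ∀ p : ℕ, p < i → X p ∩ B = ∅) :
    ∀ q : ℕ, max i l ≤ q → q ≤ j - 1 →
      B ∩ X q ⊆ ⋃ p ∈ Finset.Icc 1 (max l i), X p := by
  obtain ⟨hX0, hXtop, hX1, hXstep⟩ := hX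
  have hi1 : 1 ≤ i := by
    rcases Nat.eq_zero_or_pos i with h0 | h
    · exfalso; rw [h0, hX0] at hi; simp at hi
    · exact h
  have key : ∀ q : ℕ, ∀ x, x ∈ B → x ∈ X q → ∃ p, 1 ≤ p ∧ p ≤ max l i ∧ x ∈ X p := by
    intro q
    induction q using Nat.strong_induction_on with
    | _ q IH =>
      intro x hxB hxX
      have hqi : i ≤ q := by
        by_contra hlt
        push_neg at hlt
        have h0 := hilow q hlt
        have : x ∈ X q ∩ B := ⟨hxX, hxB⟩
        rw [h0] at this
        exact this
      by_cases hle : q ≤ max l i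
      · exact ⟨q, le_trans hi1 hqi, hle, hxX⟩
      · push_neg at hle
        have hq2 : 2 ≤ q := by
          have : i ≤ max l i := le_max_right l i
          omega
        have hqj : q < j := by
          by_contra hge; push_neg at hge
          rw [hXtop q hge] at hxX; exact hxX
        obtain ⟨h, _, hshift⟩ := (hXstep q hq2 hqj).2 x hxX
        rcases hshift with ⟨⟨l', hl', hxl'⟩, _⟩ | ⟨hno, hxeq⟩
        · exact IH l' hl' x hxB hxl'
        · exfalso
          obtain ⟨y, hyX, hyB⟩ := hi
          apply hno
          refine ⟨i, lt_of_le_of_lt (le_max_right l i) hle, y, hyX, ?_⟩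
          have hdxy : d x y ≤ ε * rlev c l := hBdiam x hxB y hyB
          have hrl : rlev c l ≤ rlev c q := by
            apply pow_le_pow_right₀ (by linarith : (1:ℝ) ≤ c / 4)
            exact le_trans (le_max_left l i) (le_of_lt hle)
          calc d h y = d x y := by rw [← hxeq]
            _ ≤ ε * rlev c l := hdxy
            _ ≤ ε * rlev c q := by
                exact mul_le_mul_of_nonneg_left hrl (le_of_lt hε)
  intro q _ _ x hx
  obtain ⟨p, hp1, hp2, hxp⟩ := key q x hx.1 hx.2
  simp only [Set.mem_iUnion, Finset.mem_Icc]
  exact ⟨p, ⟨hp1, hp2⟩, hxp⟩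
end

section
/- Suppose G has highway dimension k (Definition 1) and SPC(r) is a locally s-sparse shortest path cover for scale r. Let r̃ and v satisfy 0 < r̃ < cr/2, and let W̃ be the set of all vertices h ∈ B_{c r̃}(v) ∩ SPC(r) for which there exists a shortest path P_h containing h, lying inside B_{c r̃}(v), with length in (r̃, cr/2]. Then |W̃| ≤ sk. -/
open SimpleGraph

universe u

variable {V : Type u}

/-! Every `h ∈ W̃` lies on a shortest path inside `B_{c r̃}(v)` of length in `(r̃, c r / 2]`. The
at most `k` hubs that the highway dimension provides for scale `r̃` and the ball `B_{c r̃}(v)` hit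
this path, so `h` lies within distance `c r / 2` of one of them. Hence `W̃` is covered by at most
`k` balls of radius `c r / 2`, each containing at most `s` vertices of `SPC(r)`. -/

namespace SimpleGraph.Walk

variable {G : SimpleGraph V} {len : V → V → ℝ}

lemma wlen_append {u v w : V} (p : G.Walk u v) (q : G.Walk v w) :
    wlen len (p.append q) = wlen len p + wlen len q := by
  simp only [wlen, darts_append, List.map_append, List.sum_append]

lemma wlen_reverse (hlen_symm : ∀ u v : V, len u v = len v u) {u v : V} (p : G.Walk u v) :
    wlen len p.reverse = wlen len p := by
  simp only [wlen, darts_reverse, List.map_reverse, List.sum_reverse, List.map_map]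
  congr 1
  exact List.map_congr_left fun e _ ↦ hlen_symm _ _

lemma wlen_nonneg (hlen_pos : ∀ u v : V, G.Adj u v → 0 < len u v) {u v : V} (p : G.Walk u v) :
    0 ≤ wlen len p :=
  List.sum_nonneg <| by
    simp only [List.mem_map]
    rintro _ ⟨e, _, rfl⟩
    exact (hlen_pos _ _ e.adj).le

lemma IsSubwalk.wlen_le (hlen_pos : ∀ u v : V, G.Adj u v → 0 < len u v) {u v u' v' : V}
    {p : G.Walk u v} {q : G.Walk u' v'} (hpq : p.IsSubwalk q) : wlen len p ≤ wlen len q := by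
  obtain ⟨ru, rv, rfl⟩ := hpq
  rw [wlen_append, wlen_append]
  linarith [wlen_nonneg hlen_pos ru, wlen_nonneg hlen_pos rv]

lemma exists_isSubwalk_of_mem_support [DecidableEq V] {a b x y : V} (w : G.Walk a b)
    (hx : x ∈ w.support) (hy : y ∈ w.support) :
    ∃ p : G.Walk x y, p.IsSubwalk w ∨ p.reverse.IsSubwalk w := by
  by_cases hy' : y ∈ (w.dropUntil x hx).support
  · exact ⟨_, .inl <| (isSubwalk_takeUntil _ hy').trans (isSubwalk_dropUntil w hx)⟩
  · have hy'' : y ∈ (w.takeUntil x hx).support := by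
      rw [← w.take_spec hx, mem_support_append_iff] at hy
      exact hy.resolve_right hy'
    refine ⟨((w.takeUntil x hx).dropUntil y hy'').reverse, .inr ?_⟩
    rw [reverse_reverse]
    exact (isSubwalk_dropUntil _ hy'').trans (isSubwalk_takeUntil w hx)

lemma dist_le_wlen_of_mem_support {d : V → V → ℝ} (hlen_symm : ∀ u v : V, len u v = len v u)
    (hlen_pos : ∀ u v : V, G.Adj u v → 0 < len u v)
    (hd : ∀ (u v : V) (p : G.Walk u v), d u v ≤ wlen len p) {a b x y : V} (w : G.Walk a b)
    (hx : x ∈ w.support) (hy : y ∈ w.support) : d x y ≤ wlen len w := by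
  classical
  obtain ⟨p, hp | hp⟩ := exists_isSubwalk_of_mem_support w hx hy
  · exact (hd x y p).trans (hp.wlen_le hlen_pos)
  · exact (hd x y p).trans ((wlen_reverse hlen_symm p).symm.le.trans (hp.wlen_le hlen_pos))

end SimpleGraph.Walk

lemma Set.ncard_le_ncard_mul_of_subset_biUnion {α β : Type*} [Finite β] {S : Set β} {T : Set α}
    (hT : T.Finite) {A : α → Set β} {s : ℕ} (hS : S ⊆ ⋃ x ∈ T, A x)
    (hA : ∀ x ∈ T, (A x).ncard ≤ s) : S.ncard ≤ T.ncard * s := by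
  classical
  obtain ⟨t, rfl⟩ := hT.exists_finset_coe
  have hunion : ⋃ x ∈ (t : Set α), A x = ↑(t.biUnion fun x ↦ (A x).toFinite.toFinset) := by
    ext; simp
  calc S.ncard ≤ (t.biUnion fun x ↦ (A x).toFinite.toFinset).card := by
        rw [← Set.ncard_coe_finset, ← hunion]
        exact Set.ncard_le_ncard hS
    _ ≤ t.card * s := Finset.card_biUnion_le_card_mul _ _ _ fun x hx ↦ by
        rw [← Set.ncard_eq_toFinset_card]
        exact hA x hx
    _ = (t : Set α).ncard * s := by rw [Set.ncard_coe_finset]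

theorem statement8_general {V : Type} [Fintype V] (G : SimpleGraph V) (len d : V → V → ℝ)
    (hlen_symm : ∀ u v : V, len u v = len v u)
    (hlen_pos : ∀ u v : V, G.Adj u v → 0 < len u v)
    (hmetric : IsShortestPathMetric G len d)
    (c : ℝ) (r : ℝ)
    (rt : ℝ) (hrt : 0 < rt)
    (k s : ℕ) (hHD : HighwayDimLE G len d c k)
    (H : Set V)
    (hsparse : LocallySparse d c r s H)
    (v : V) :
    ({h : V | h ∈ cball d v (c * rt) ∧ h ∈ H ∧
        ∃ (a b : V) (w : G.Walk a b), IsShortestPath len d w ∧ h ∈ w.support ∧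
          (∀ x ∈ w.support, x ∈ cball d v (c * rt)) ∧
          rt < wlen len w ∧ wlen len w ≤ c * r / 2}).ncard ≤ s * k := by
  obtain ⟨hubs, -, hcard, hhit⟩ := hHD rt hrt v
  have hcover : {h : V | h ∈ cball d v (c * rt) ∧ h ∈ H ∧
      ∃ (a b : V) (w : G.Walk a b), IsShortestPath len d w ∧ h ∈ w.support ∧
        (∀ x ∈ w.support, x ∈ cball d v (c * rt)) ∧
        rt < wlen len w ∧ wlen len w ≤ c * r / 2} ⊆ ⋃ x ∈ hubs, H ∩ cball d x (c * r / 2) := by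
    rintro h ⟨-, hhH, a, b, w, hw, hhw, hinside, hlong, hshort⟩
    obtain ⟨x, hx, hxw⟩ := hhit a b w hw hinside hlong
    exact Set.mem_biUnion hx ⟨hhH, (Walk.dist_le_wlen_of_mem_support hlen_symm hlen_pos
      hmetric.1 w hhw hxw).trans hshort⟩
  calc _ ≤ hubs.ncard * s :=
        Set.ncard_le_ncard_mul_of_subset_biUnion hubs.toFinite hcover fun x _ ↦ hsparse x
    _ ≤ k * s := Nat.mul_le_mul_right s hcard
    _ = s * k := Nat.mul_comm k s

/-- Lemma 15 of the paper: let `G` have highway dimension `k`,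
let `SPC(r)` be a locally `s`-sparse shortest path cover, let `0 < r̃ < c*r/2`, and
let `W̃` be the set of hubs `h ∈ B_{c*r̃}(v) ∩ SPC(r)` lying on some shortest path
that lies inside `B_{c*r̃}(v)` and has length in `(r̃, c*r/2]`. Then `|W̃| ≤ s*k`. -/
theorem statement8 {V : Type} [Fintype V] (G : SimpleGraph V) (len d : V → V → ℝ)
    (hlen_symm : ∀ u v : V, len u v = len v u)
    (hlen_pos : ∀ u v : V, G.Adj u v → 0 < len u v)
    (hmetric : IsShortestPathMetric G len d)
    (c : ℝ) (hc : 4 ≤ c) (r : ℝ) (hr : 0 < r)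
    (rt : ℝ) (hrt : 0 < rt) (hrtlt : rt < c * r / 2)
    (k s : ℕ) (hHD : HighwayDimLE G len d c k)
    (H : Set V) (hH : IsSPC G len d c r H)
    (hsparse : LocallySparse d c r s H)
    (v : V) :
    ({h : V | h ∈ cball d v (c * rt) ∧ h ∈ H ∧
        ∃ (a b : V) (w : G.Walk a b), IsShortestPath len d w ∧ h ∈ w.support ∧
          (∀ x ∈ w.support, x ∈ cball d v (c * rt)) ∧
          rt < wlen len w ∧ wlen len w ≤ c * r / 2}).ncard ≤ s * k :=
  statement8_general G len d hlen_symm hlen_pos hmetric c r rt hrt k s hHD H hsparse v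
end

section
/- Let C_Y ⊆ Y and let b_Y ⊆ C_Y be a δ-net of C_Y. Define the expansions C_X = {x ∈ X : rep(x) ∈ C_Y} and b_X = {x ∈ X : rep(x) ∈ b_Y}. Then b_X is a 2δ-cover of C_X: for every x ∈ C_X there exists y ∈ b_X with dist(x,y) ≤ 2δ. -/
/-- Lemma 19 of the paper, abstract form: let `𝒯` be a family of
pairwise disjoint subsets of a metric space, each satisfying
`diam(T) ≤ dist(T, V ∖ T)`; let `X ⊆ ⋃ 𝒯`, let `Y ⊆ X` contain exactly one point
of `X ∩ T` for each `T ∈ 𝒯` meeting `X`, and let `rep` map each `x ∈ X` to the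
point of `Y` in the same member of `𝒯`. If `b_Y` is a `δ`-net of `C_Y ⊆ Y`, then
the expansion `b_X = {x ∈ X | rep x ∈ b_Y}` is a `2δ`-cover of
`C_X = {x ∈ X | rep x ∈ C_Y}`. -/
theorem statement13 {V : Type*} [MetricSpace V]
    (𝒯 : Set (Set V))
    (hdisj : ∀ T₁ ∈ 𝒯, ∀ T₂ ∈ 𝒯, T₁ ≠ T₂ → Disjoint T₁ T₂)
    (hsep : ∀ T ∈ 𝒯, ∀ x ∈ T, ∀ y ∈ T, ∀ p ∈ T, ∀ q : V, q ∉ T → dist x y ≤ dist p q)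
    (X Y : Set V) (hXT : X ⊆ ⋃₀ 𝒯) (hYX : Y ⊆ X)
    (hYuniq : ∀ T ∈ 𝒯, ∀ y₁ ∈ Y, ∀ y₂ ∈ Y, y₁ ∈ T → y₂ ∈ T → y₁ = y₂)
    (hYex : ∀ T ∈ 𝒯, (X ∩ T).Nonempty → (Y ∩ T).Nonempty)
    (rep : V → V)
    (hrep : ∀ x ∈ X, rep x ∈ Y ∧ ∃ T ∈ 𝒯, x ∈ T ∧ rep x ∈ T)
    (δ : ℝ) (hδ : 0 < δ)
    (CY bY : Set V) (hCY : CY ⊆ Y) (hbY : bY ⊆ CY)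
    (hnet_cover : ∀ y ∈ CY, ∃ z ∈ bY, dist y z ≤ δ)
    (hnet_sep : ∀ z₁ ∈ bY, ∀ z₂ ∈ bY, z₁ ≠ z₂ → δ < dist z₁ z₂) :
    ∀ x ∈ {p : V | p ∈ X ∧ rep p ∈ CY},
      ∃ y ∈ {p : V | p ∈ X ∧ rep p ∈ bY}, dist x y ≤ 2 * δ := by
  rintro x ⟨hxX, hxC⟩
  obtain ⟨z, hzb, hzd⟩ := hnet_cover (rep x) hxC
  have hzY : z ∈ Y := hCY (hbY hzb)
  have hzX : z ∈ X := hYX hzY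
  obtain ⟨hrY, T, hT, hxT, hrT⟩ := hrep x hxX
  obtain ⟨hrzY, T', hT', hzT', hrzT'⟩ := hrep z hzX
  have hrz : rep z = z := hYuniq T' hT' (rep z) hrzY z hzY hrzT' hzT'
  by_cases hzT : z ∈ T
  · refine ⟨x, ⟨hxX, ?_⟩, by simpa using le_of_lt (by linarith : (0:ℝ) < 2*δ)⟩
    have : rep x = z := hYuniq T hT (rep x) hrY z hzY hrT hzT
    rw [this]; exact hzb
  · refine ⟨z, ⟨hzX, by rw [hrz]; exact hzb⟩, ?_⟩
    have h1 : dist x (rep x) ≤ dist (rep x) z := hsep T hT x hxT (rep x) hrT (rep x) hrT z hzT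
    calc dist x z ≤ dist x (rep x) + dist (rep x) z := dist_triangle _ _ _
      _ ≤ δ + δ := by linarith
      _ = 2 * δ := by ring
end

section
/- Let (V, dist) be a metric space and let T', T'' ⊆ V be disjoint sets satisfying diam(T') ≤ dist(T', V∖T') and diam(T'') ≤ dist(T'', V∖T''). Then for all u, u' ∈ T' and v, v' ∈ T'' one has dist(u', v') ≤ 3·dist(u, v). -/
/-- metric claim inside Lemma 20 of the paper: if `T'` and `T''`
are disjoint subsets of a metric space, each satisfying
`diam(T) ≤ dist(T, V ∖ T)`, then for all `u, u' ∈ T'` and `v, v' ∈ T''`,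
`dist(u', v') ≤ 3 * dist(u, v)`. -/
theorem statement14 {V : Type*} [MetricSpace V] (T₁ T₂ : Set V)
    (hdisj : Disjoint T₁ T₂)
    (hsep₁ : ∀ x ∈ T₁, ∀ y ∈ T₁, ∀ p ∈ T₁, ∀ q : V, q ∉ T₁ → dist x y ≤ dist p q)
    (hsep₂ : ∀ x ∈ T₂, ∀ y ∈ T₂, ∀ p ∈ T₂, ∀ q : V, q ∉ T₂ → dist x y ≤ dist p q)
    (u : V) (hu : u ∈ T₁) (u' : V) (hu' : u' ∈ T₁)
    (v : V) (hv : v ∈ T₂) (v' : V) (hv' : v' ∈ T₂) :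
    dist u' v' ≤ 3 * dist u v := by
  have hvn : v ∉ T₁ := fun h => (hdisj.ne_of_mem h hv) rfl
  have hun : u ∉ T₂ := fun h => (hdisj.ne_of_mem hu h) rfl
  have h1 : dist u' u ≤ dist u v := hsep₁ u' hu' u hu u hu v hvn
  have h2 : dist v v' ≤ dist v u := hsep₂ v hv v' hv' v hv u hun
  have h3 : dist u' v' ≤ dist u' u + dist u v + dist v v' := dist_triangle4 _ _ _ _
  rw [dist_comm v u] at h2
  linarith
end
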